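/- Let Γ be a metrically homogeneous graph of generic type with diameter δ, and let σ be a permutation of {1,…,δ} such that Γ^σ is metrically homogeneous and σ(2) = 2. Then for all k with 3 ≤ k ≤ δ, one has |σ(k) − σ(k−2)| ≤ 2 and |σ⁻¹(k) − σ⁻¹(k−2)| ≤ 2. -/

import Mathlib

open SimpleGraph

section Defs

variable {V : Type*}

/-- A graph is *metrically homogeneous* if it is connected and every
distance-preserving map defined on a finite set of vertices extends to a
distance-preserving bijection of the whole vertex set (with respect to the
path metric). -/
def IsMetricallyHomogeneous (G : SimpleGraph V) : Prop :=
  G.Connected ∧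
  ∀ (s : Finset V) (f : V → V),
    (∀ x ∈ s, ∀ y ∈ s, G.dist (f x) (f y) = G.dist x y) →
    ∃ g : V ≃ V, (∀ x y : V, G.dist (g x) (g y) = G.dist x y) ∧ ∀ x ∈ s, g x = f x

/-- `δ` is the diameter of `G` (with respect to the path metric). -/
def HasDiameter (G : SimpleGraph V) (δ : ℕ) : Prop :=
  (∀ x y : V, G.dist x y ≤ δ) ∧ ∃ x y : V, G.dist x y = δ

/-- The set of (nonzero) distances realized in `G`. -/
def DistSet (G : SimpleGraph V) : Set ℕ :=
  {n : ℕ | 0 < n ∧ ∃ x y : V, G.dist x y = n}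

/-- `G` is of *generic type*: any two vertices at distance `2` have infinitely
many common neighbors forming an independent set, and the set of neighbors of
any fixed vertex (with the induced metric) carries no non-trivial equivalence
relation invariant under all of its self-isometries. -/
def GenericType (G : SimpleGraph V) : Prop :=
  (∀ x y : V, G.dist x y = 2 →
    {z : V | G.Adj x z ∧ G.Adj y z}.Infinite ∧
    ∀ z w : V, (G.Adj x z ∧ G.Adj y z) → (G.Adj x w ∧ G.Adj y w) → ¬ G.Adj z w) ∧
  ∀ v : V, ∀ r : G.neighborSet v → G.neighborSet v → Prop,
    Equivalence r →
    (∀ g : G.neighborSet v ≃ G.neighborSet v,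
      (∀ x y : G.neighborSet v, G.dist (g x : V) (g y : V) = G.dist (x : V) (y : V)) →
      ∀ x y : G.neighborSet v, r x y → r (g x) (g y)) →
    (∀ x y, r x y) ∨ (∀ x y, r x y → x = y)

/-- A triangle of type `(a,b,c)` is realized in `G`. -/
def RealizesTriangle (G : SimpleGraph V) (a b c : ℕ) : Prop :=
  ∃ x y z : V, G.dist x y = a ∧ G.dist y z = b ∧ G.dist x z = c

/-- `G` contains a triangle (three distinct vertices) of perimeter `p`. -/
def RealizesPerimeter (G : SimpleGraph V) (p : ℕ) : Prop :=
  ∃ x y z : V, x ≠ y ∧ y ≠ z ∧ x ≠ z ∧ G.dist x y + G.dist y z + G.dist x z = p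

/-- `k` is the parameter `K₁` of `G`: the least `m` such that a triangle of
type `(m,m,1)` is realized in `G`. -/
def IsK1 (G : SimpleGraph V) (k : ℕ) : Prop :=
  IsLeast {m : ℕ | RealizesTriangle G m m 1} k

/-- `k` is the parameter `K₂` of `G`: the greatest `m` such that a triangle of
type `(m,m,1)` is realized in `G`. -/
def IsK2 (G : SimpleGraph V) (k : ℕ) : Prop :=
  IsGreatest {m : ℕ | RealizesTriangle G m m 1} k

/-- `c` is the parameter `C₀` of `G` (relative to the diameter `δ`): the least
even number greater than `2δ` such that no triangle of perimeter `c` occurs. -/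
def IsC0 (G : SimpleGraph V) (δ c : ℕ) : Prop :=
  IsLeast {c' : ℕ | Even c' ∧ 2 * δ < c' ∧ ¬ RealizesPerimeter G c'} c

/-- `c` is the parameter `C₁` of `G` (relative to the diameter `δ`): the least
odd number greater than `2δ` such that no triangle of perimeter `c` occurs. -/
def IsC1 (G : SimpleGraph V) (δ c : ℕ) : Prop :=
  IsLeast {c' : ℕ | Odd c' ∧ 2 * δ < c' ∧ ¬ RealizesPerimeter G c'} c

/-- `G` (of diameter `δ`) is antipodal: every vertex has a unique vertex at
distance `δ` from it. -/
def IsAntipodal (G : SimpleGraph V) (δ : ℕ) : Prop :=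
  ∀ v : V, ∃! w : V, G.dist v w = δ

/-- `G` is bipartite. -/
def IsBipartiteGraph (G : SimpleGraph V) : Prop :=
  ∃ f : V → Bool, ∀ x y : V, G.Adj x y → f x ≠ f y

/-- `G` is complete multipartite: there is an equivalence relation such that
two vertices are adjacent exactly when they are inequivalent. -/
def IsCompleteMultipartiteGraph (G : SimpleGraph V) : Prop :=
  ∃ r : V → V → Prop, Equivalence r ∧ ∀ x y : V, G.Adj x y ↔ ¬ r x y

/-- `G` is an `n`-cycle. -/
def IsNCycle (G : SimpleGraph V) (n : ℕ) : Prop :=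
  ∃ e : V ≃ ZMod n, ∀ x y : V, G.Adj x y ↔ (e x - e y = 1 ∨ e y - e x = 1)

/-- The permutation `ρ` of `{1,…,δ}`. -/
def rhoFun (δ i : ℕ) : ℕ := if 2 * i ≤ δ then 2 * i else 2 * (δ - i) + 1

/-- The permutation `ρ⁻¹` of `{1,…,δ}`. -/
def rhoInvFun (δ i : ℕ) : ℕ := if Even i then i / 2 else δ - (i - 1) / 2

/-- The involution `τ_ε` of `{1,…,δ}`, for `ε = 0` or `1`. -/
def tauFun (δ ε i : ℕ) : ℕ := if Odd (min i (δ + ε - i)) then δ + ε - i else i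

/-- The `n`-cycle graph on `ZMod n`. -/
def zmodCycleGraph (n : ℕ) : SimpleGraph (ZMod n) where
  Adj x y := x ≠ y ∧ (x - y = 1 ∨ y - x = 1)
  symm := ⟨fun x y h => ⟨h.1.symm, h.2.symm⟩⟩
  loopless := ⟨fun x h => h.1 rfl⟩

end Defs

/-!
A geodesic triangle with sides `k - 2, 2, k` in `G` becomes a triangle with sides
`σ (k - 2), 2, σ k` in the twist, and the triangle inequality there bounds
`|σ k - σ (k - 2)|` by `2`. The bound for `σ⁻¹` is the same argument with the roles of the
two graphs exchanged; it applies because `σ` permutes `{1, …, δ}`, so every `k ≤ δ` is a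
distance of the twisted graph too.
-/

namespace SimpleGraph

variable {V : Type*} {G H : SimpleGraph V}

theorem ne_of_dist_ne_zero {u v : V} (h : G.dist u v ≠ 0) : u ≠ v := by
  rintro rfl
  exact h dist_self

theorem Connected.exists_dist_eq_and_dist_eq_sub (hG : G.Connected) {x z : V} {m : ℕ}
    (hm : m ≤ G.dist x z) : ∃ y, G.dist x y = m ∧ G.dist y z = G.dist x z - m := by
  obtain ⟨p, hp⟩ := hG.exists_walk_length_eq_dist x z
  have hxy : G.dist x (p.getVert m) ≤ m :=
    (dist_le _).trans (p.take_length m ▸ min_le_left _ _)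
  have hyz : G.dist (p.getVert m) z ≤ G.dist x z - m := by
    simpa [Walk.drop_length, hp] using dist_le (p.drop m)
  have := hG.dist_triangle (u := x) (v := p.getVert m) (w := z)
  exact ⟨p.getVert m, by omega, by omega⟩

end SimpleGraph

theorem HasDiameter.exists_dist_eq {V : Type*} {G : SimpleGraph V} {δ m : ℕ}
    (hdiam : HasDiameter G δ) (hG : G.Connected) (hm : m ≤ δ) : ∃ x z : V, G.dist x z = m := by
  obtain ⟨-, a, b, hab⟩ := hdiam
  obtain ⟨y, hy, -⟩ := hG.exists_dist_eq_and_dist_eq_sub (hab ▸ hm)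
  exact ⟨a, y, hy⟩

/-- `H` is the twist `G^σ` of `G`. -/
def IsTwist {V : Type*} (G H : SimpleGraph V) (σ : Equiv.Perm ℕ) : Prop :=
  ∀ x y : V, x ≠ y → H.dist x y = σ (G.dist x y)

namespace IsTwist

variable {V : Type*} {G H : SimpleGraph V} {σ : Equiv.Perm ℕ}

theorem symm (htw : IsTwist G H σ) : IsTwist H G σ.symm := fun x y hxy => by
  rw [htw x y hxy, Equiv.symm_apply_apply]

theorem abs_sub_le_two (htw : IsTwist G H σ) (hG : G.Connected) (hH : H.Connected)
    (h2 : σ 2 = 2) {x z : V} {k : ℕ} (hxz : G.dist x z = k) (hk : 3 ≤ k) :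
    |(σ k : ℤ) - (σ (k - 2) : ℤ)| ≤ 2 := by
  obtain ⟨y, hxy, hyz⟩ :=
    hG.exists_dist_eq_and_dist_eq_sub (x := x) (z := z) (m := k - 2) (by omega)
  rw [hxz, show k - (k - 2) = 2 by omega] at hyz
  have exz : H.dist x z = σ k := by
    rw [htw x z (SimpleGraph.ne_of_dist_ne_zero (G := G) (by omega)), hxz]
  have exy : H.dist x y = σ (k - 2) := by
    rw [htw x y (SimpleGraph.ne_of_dist_ne_zero (G := G) (by omega)), hxy]
  have eyz : H.dist y z = 2 := by
    rw [htw y z (SimpleGraph.ne_of_dist_ne_zero (G := G) (by omega)), hyz, h2]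
  have t₁ := hH.dist_triangle (u := x) (v := y) (w := z)
  have t₂ := hH.dist_triangle (u := x) (v := z) (w := y)
  rw [SimpleGraph.dist_comm (u := z)] at t₂
  rw [abs_le]
  omega

end IsTwist

theorem sigma_two_apart_general {V : Type*} (G H : SimpleGraph V) (δ : ℕ)
    (σ : Equiv.Perm ℕ)
    (hG : IsMetricallyHomogeneous G)
    (hdiam : HasDiameter G δ)
    (hperm : ∀ i ∈ Finset.Icc 1 δ, σ i ∈ Finset.Icc 1 δ)
    (hH : IsMetricallyHomogeneous H)
    (htw : ∀ x y : V, x ≠ y → H.dist x y = σ (G.dist x y))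
    (h2 : σ 2 = 2) :
    ∀ k : ℕ, 3 ≤ k → k ≤ δ →
      |(σ k : ℤ) - (σ (k - 2) : ℤ)| ≤ 2 ∧
      |(σ.symm k : ℤ) - (σ.symm (k - 2) : ℤ)| ≤ 2 := by
  intro k hk3 hkδ
  have htw : IsTwist G H σ := htw
  obtain ⟨x, z, hxz⟩ := hdiam.exists_dist_eq hG.1 hkδ
  obtain ⟨m, hm, hσm⟩ := Finset.surjOn_of_injOn_of_card_le σ (fun i hi => hperm i hi)
    σ.injective.injOn le_rfl (Finset.mem_Icc.mpr ⟨by omega, hkδ⟩)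
  obtain ⟨hm1, hmδ⟩ := Finset.mem_Icc.mp hm
  obtain ⟨x', z', hxz'⟩ := hdiam.exists_dist_eq hG.1 hmδ
  have hHxz' : H.dist x' z' = k := by
    rw [htw x' z' (SimpleGraph.ne_of_dist_ne_zero (G := G) (by omega)), hxz', hσm]
  exact ⟨htw.abs_sub_le_two hG.1 hH.1 h2 hxz hk3,
    htw.symm.abs_sub_le_two hH.1 hG.1 (σ.symm_apply_eq.mpr h2.symm) hHxz' hk3⟩

/-- if `σ(2) = 2`, then consecutive values two apart of `σ` and
`σ⁻¹` differ by at most `2`. -/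
theorem sigma_two_apart {V : Type*} (G H : SimpleGraph V) (δ : ℕ)
    (σ : Equiv.Perm ℕ)
    (hG : IsMetricallyHomogeneous G) (hgen : GenericType G)
    (hdiam : HasDiameter G δ)
    (hperm : ∀ i ∈ Finset.Icc 1 δ, σ i ∈ Finset.Icc 1 δ)
    (hH : IsMetricallyHomogeneous H)
    (htw : ∀ x y : V, x ≠ y → H.dist x y = σ (G.dist x y))
    (h2 : σ 2 = 2) :
    ∀ k : ℕ, 3 ≤ k → k ≤ δ →
      |(σ k : ℤ) - (σ (k - 2) : ℤ)| ≤ 2 ∧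
      |(σ.symm k : ℤ) - (σ.symm (k - 2) : ℤ)| ≤ 2 :=
  sigma_two_apart_general G H δ σ hG hdiam hperm hH htw h2
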